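/- In a DAG satisfying the Markov condition with distribution P, d-separation implies conditional independence: if Z d-separates M and N in G, then M ⊥ N | Z in P (soundness of d-separation, stated for the special case where P factorizes according to G over finitely many finite-valued variables). -/

import Mathlib

open scoped Classical

/-- A directed graph is acyclic if no vertex reaches itself by a nonempty directed walk. -/
def Acyclic {V : Type*} (adj : V → V → Prop) : Prop :=
  ∀ v, ¬ Relation.TransGen adj v v

/-- `Desc adj x y` : `y` is a (proper) descendant of `x`. -/
def Desc {V : Type*} (adj : V → V → Prop) (x y : V) : Prop :=
  Relation.TransGen adj x y

/-- An (undirected) path between `M` and `N` in the directed graph `adj`,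
represented as the list of its vertices. -/
def IsTrail {V : Type*} (adj : V → V → Prop) (p : List V) (M N : V) : Prop :=
  p.Chain' (fun a b => adj a b ∨ adj b a) ∧ p.head? = some M ∧ p.getLast? = some N ∧
    p.Nodup ∧ 2 ≤ p.length

/-- Interior position `i` of the path `p` is a collider (both adjacent edges point into it). -/
def ColliderAt {V : Type*} (adj : V → V → Prop) (p : List V) (i : ℕ) : Prop :=
  ∃ a x b, p[i-1]? = some a ∧ p[i]? = some x ∧ p[i+1]? = some b ∧ adj a x ∧ adj b x

/-- The path `p` is blocked by the conditioning set `Z`: some interior node is a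
non-collider belonging to `Z`, or a collider such that neither it nor any of its
descendants belongs to `Z`. -/
def Blocked {V : Type*} (adj : V → V → Prop) (Z : Set V) (p : List V) : Prop :=
  ∃ i x, 0 < i ∧ i + 1 < p.length ∧ p[i]? = some x ∧
    ((¬ ColliderAt adj p i ∧ x ∈ Z) ∨
     (ColliderAt adj p i ∧ x ∉ Z ∧ ∀ d, Desc adj x d → d ∉ Z))

/-- `Z` d-separates `M` and `N`: every path between them is blocked. -/
def DSep {V : Type*} (adj : V → V → Prop) (Z : Set V) (M N : V) : Prop :=
  ∀ p, IsTrail adj p M N → Blocked adj Z p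

/-- d-separation of sets of nodes. -/
def DSepS {V : Type*} (adj : V → V → Prop) (Z A B : Set V) : Prop :=
  ∀ M ∈ A, ∀ N ∈ B, DSep adj Z M N

/-- Marginal of the joint pmf `p` on the variable set `S`, evaluated at configuration `f`. -/
noncomputable def Marg {V : Type*} [Fintype V] [DecidableEq V] {vals : V → Type*}
    [∀ v, Fintype (vals v)] (p : (∀ v, vals v) → ℝ) (S : Finset V)
    (f : ∀ v, vals v) : ℝ :=
  ∑ u : ∀ v, vals v, if ∀ v ∈ S, u v = f v then p u else 0

/-- Conditional independence of the variable sets `A` and `B` given `C`,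
phrased via the factorization of marginals of the joint pmf `p`. -/
def CI {V : Type*} [Fintype V] [DecidableEq V] {vals : V → Type*}
    [∀ v, Fintype (vals v)] (p : (∀ v, vals v) → ℝ) (A B C : Finset V) : Prop :=
  ∀ f, Marg p (A ∪ B ∪ C) f * Marg p C f = Marg p (A ∪ C) f * Marg p (B ∪ C) f


/-!
The factorization makes the marginal on every ancestral set `W` the product of the conditionals
`P(Y | Pa Y)`, `Y ∈ W`. This is proved by adding one childless vertex at a time: the conditionals of
the vertices outside `W` have total mass at most one, and on the nonzero part of the product the
mass is forced to be exactly one.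

Let `U` be the ancestral closure of `{M, N} ∪ Z` and `R` the set of vertices joined to `N` in the
moral graph of `U` with `Z` deleted. Every family of `U` lies in `Z ∪ R` or in `U \ R`, so the
marginal on `U` is a product of a function of the `Z ∪ R`-coordinates and a function of the
`U \ R`-coordinates, which gives `M ⊥ N | Z` once `M ∉ R`. A moral path from `M` to `N` avoiding
`Z` would give a d-connecting walk from `M` to `N`, and cutting loops out of such a walk keeps it
d-connecting, so d-separation rules the path out.
-/

open Function Relation

theorem Acyclic.exists_mem_forall_not_adj {V : Type*} [Finite V] {adj : V → V → Prop}
    (hacyc : Acyclic adj) {s : Finset V} (hs : s.Nonempty) : ∃ X ∈ s, ∀ v ∈ s, ¬ adj v X := by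
  have : IsTrans V (TransGen adj) := ⟨fun _ _ _ => TransGen.trans⟩
  have : Std.Irrefl (TransGen adj) := ⟨hacyc⟩
  obtain ⟨X, hX, hmin⟩ := (Finite.wellFounded_of_trans_of_irrefl (TransGen adj)).has_min s hs
  exact ⟨X, hX, fun v hv h => hmin v hv (.single h)⟩

theorem Acyclic.swap {V : Type*} {adj : V → V → Prop} (hacyc : Acyclic adj) :
    Acyclic (swap adj) :=
  fun v h => hacyc v (transGen_swap.1 h)

theorem Acyclic.asymm {V : Type*} {adj : V → V → Prop} (hacyc : Acyclic adj) {a b : V}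
    (h : adj a b) : ¬ adj b a :=
  fun h' => hacyc a (.tail (.single h) h')

theorem Acyclic.notMem_parents {V : Type*} {adj : V → V → Prop}
    {Pa : V → Finset V} (hacyc : Acyclic adj) (hPa : ∀ X v, v ∈ Pa X ↔ adj v X) (X : V) :
    X ∉ Pa X :=
  fun h => hacyc X (.single ((hPa X X).1 h))

def IsAncestral {V : Type*} (Pa : V → Finset V) (W : Finset V) : Prop :=
  ∀ Y ∈ W, Pa Y ⊆ W

theorem IsAncestral.insert {V : Type*} [DecidableEq V] {Pa : V → Finset V} {W : Finset V}
    (hW : IsAncestral Pa W) {X : V} (hPaX : Pa X ⊆ W) : IsAncestral Pa (insert X W) :=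
  fun Y hY => by
    rcases Finset.mem_insert.1 hY with rfl | hY
    exacts [hPaX.trans (Finset.subset_insert _ _), (hW Y hY).trans (Finset.subset_insert _ _)]

section Marginals

/- `Marg F S f` is used below for arbitrary real functions `F`, not only for `p`: it sums `F` over
the configurations that agree with `f` on `S`. -/

open Finset

variable {V : Type*} [Fintype V] [DecidableEq V] {vals : V → Type*} [∀ v, Fintype (vals v)]
  {p F G : (∀ v, vals v) → ℝ} {S S' : Finset V}

theorem marg_nonneg (hp : ∀ u, 0 ≤ p u) (S : Finset V) (f : ∀ v, vals v) : 0 ≤ Marg p S f :=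
  sum_nonneg fun u _ => by split_ifs <;> simp [hp u]

theorem marg_congr {f f' : ∀ v, vals v} (h : ∀ v ∈ S, f v = f' v) :
    Marg p S f = Marg p S f' :=
  sum_congr rfl fun u _ => if_congr (forall₂_congr fun v hv => by rw [h v hv]) rfl rfl

theorem marg_empty (f : ∀ v, vals v) : Marg p ∅ f = ∑ u, p u := by
  simp [Marg]

theorem marg_univ (f : ∀ v, vals v) : Marg p univ f = p f := by
  simp [Marg, ← funext_iff]

theorem marg_mul_left {f : ∀ v, vals v} (hG : ∀ u, (∀ v ∈ S, u v = f v) → G u = G f) :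
    Marg (fun u => G u * F u) S f = G f * Marg F S f := by
  rw [Marg, Marg, mul_sum]
  refine sum_congr rfl fun u _ => ?_
  split_ifs with h
  · rw [hG u h]
  · rw [mul_zero]

theorem sum_marg_insert_update {X : V} (hX : X ∉ S) (f : ∀ v, vals v) :
    ∑ x, Marg p (insert X S) (update f X x) = Marg p S f := by
  simp only [Marg]
  rw [sum_comm]
  refine sum_congr rfl fun u _ => ?_
  have hS : ∀ v ∈ S, v ≠ X := fun v hv h => hX (h ▸ hv)
  have key : ∀ x, (∀ v ∈ insert X S, u v = update f X x v) ↔ (u X = x ∧ ∀ v ∈ S, u v = f v) :=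
    fun x => by
      rw [forall_mem_insert, update_self]
      exact and_congr_right fun _ => forall₂_congr fun v hv => by rw [update_of_ne (hS v hv)]
  simp_rw [key, ite_and, sum_ite_eq, mem_univ, if_true]

theorem marg_marg (h : S ∪ S' = univ) (f : ∀ v, vals v) :
    Marg (Marg p S) S' f = Marg p (S ∩ S') f := by
  have hcomm : Marg (Marg p S) S' f =
      ∑ u, ∑ g : ∀ v, vals v, if (∀ v ∈ S', g v = f v) ∧ ∀ v ∈ S, u v = g v then p u else 0 := by
    rw [Marg, sum_comm]
    refine sum_congr rfl fun g _ => ?_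
    split_ifs with hg
    · simp only [Marg, and_iff_right hg]
    · simp [hg]
  rw [hcomm]
  refine sum_congr rfl fun u _ => ?_
  have key : ∀ g : ∀ v, vals v, ((∀ v ∈ S', g v = f v) ∧ ∀ v ∈ S, u v = g v) ↔
      (g = fun v => if v ∈ S then u v else f v) ∧ ∀ v ∈ S ∩ S', u v = f v := by
    intro g
    have hv : ∀ v, v ∈ S ∨ v ∈ S' := fun v => mem_union.1 (h ▸ mem_univ v)
    constructor
    · rintro ⟨hS', hS⟩
      refine ⟨funext fun v => ?_, fun v hv => ?_⟩
      · split_ifs with hvS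
        exacts [(hS v hvS).symm, hS' v ((hv v).resolve_left hvS)]
      · rw [mem_inter] at hv
        rw [hS v hv.1, hS' v hv.2]
    · rintro ⟨rfl, hSS'⟩
      refine ⟨fun v hv' => ?_, fun v hv' => by simp [hv']⟩
      dsimp only
      split_ifs with hvS
      exacts [hSS' v (mem_inter.2 ⟨hvS, hv'⟩), rfl]
  simp_rw [key, ite_and, sum_ite_eq', mem_univ, if_true]

theorem marg_mul {g h : (∀ v, vals v) → ℝ} (hS : S ∪ S' = univ)
    (hg : ∀ u u', (∀ v ∈ S', u v = u' v) → g u = g u')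
    (hh : ∀ u u', (∀ v ∈ S, u v = u' v) → h u = h u') (f : ∀ v, vals v) :
    Marg (fun u => g u * h u) (S ∩ S') f = Marg g S f * Marg h S' f := by
  have hv : ∀ v, v ∈ S ∨ v ∈ S' := fun v => mem_union.1 (hS ▸ mem_univ v)
  simp only [Marg, ← sum_filter, sum_mul_sum, ← sum_product']
  refine sum_nbij'
    (fun u => (fun v => if v ∈ S then f v else u v, fun v => if v ∈ S' then f v else u v))
    (fun w v => if v ∈ S then w.2 v else w.1 v) ?_ ?_ ?_ ?_ ?_
  · intro u _
    simp only [mem_filter, mem_univ, true_and, mem_product]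
    exact ⟨fun v hv => by simp [hv], fun v hv => by simp [hv]⟩
  · intro w hw
    simp only [mem_filter, mem_univ, true_and, mem_inter, mem_product] at hw ⊢
    exact fun v hv => by simp [hv.1, hw.2 v hv.2]
  · intro u hu
    simp only [mem_filter, mem_univ, true_and, mem_inter] at hu
    funext v
    grind
  · intro w hw
    simp only [mem_filter, mem_univ, true_and, mem_product] at hw
    ext v <;> grind
  · intro u hu
    simp only [mem_filter, mem_univ, true_and, mem_inter] at hu
    congr 1
    exacts [hg _ _ fun v _ => by grind, hh _ _ fun v _ => by grind]

end Marginals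

section Factorization

open Finset

variable {V : Type*} [Fintype V] [DecidableEq V] {vals : V → Type*} [∀ v, Fintype (vals v)]
  {adj : V → V → Prop} {Pa : V → Finset V} {p : (∀ v, vals v) → ℝ}

/-- `P(X = u X | Pa X = u on Pa X)`; it is `0` (division by zero) where the parent configuration
has probability zero. -/
noncomputable def parentCond (Pa : V → Finset V) (p : (∀ v, vals v) → ℝ) (X : V)
    (u : ∀ v, vals v) : ℝ :=
  Marg p (insert X (Pa X)) u / Marg p (Pa X) u

noncomputable def tailMass (Pa : V → Finset V) (p : (∀ v, vals v) → ℝ) (W : Finset V)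
    (u : ∀ v, vals v) : ℝ :=
  Marg (fun w => ∏ Y ∈ Wᶜ, parentCond Pa p Y w) W u

theorem parentCond_nonneg (hp : ∀ u, 0 ≤ p u) (X : V) (u : ∀ v, vals v) :
    0 ≤ parentCond Pa p X u :=
  div_nonneg (marg_nonneg hp _ _) (marg_nonneg hp _ _)

theorem parentCond_congr {X : V} {u u' : ∀ v, vals v} (h : ∀ v ∈ insert X (Pa X), u v = u' v) :
    parentCond Pa p X u = parentCond Pa p X u' := by
  rw [parentCond, parentCond, marg_congr h, marg_congr fun v hv => h v (mem_insert_of_mem hv)]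

theorem sum_parentCond_update_le_one {X : V} (hX : X ∉ Pa X) (u : ∀ v, vals v) :
    ∑ x, parentCond Pa p X (update u X x) ≤ 1 := by
  have hden : ∀ x, Marg p (Pa X) (update u X x) = Marg p (Pa X) u := fun x =>
    marg_congr fun v hv => update_of_ne (ne_of_mem_of_not_mem hv hX) x u
  simp only [parentCond, hden, ← sum_div, sum_marg_insert_update hX]
  exact div_self_le_one _

theorem tailMass_eq_sum {W : Finset V} {X : V} (hX : X ∉ W) (hPaX : Pa X ⊆ W)
    (u : ∀ v, vals v) :
    tailMass Pa p W u = ∑ x, parentCond Pa p X (update u X x) *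
      tailMass Pa p (insert X W) (update u X x) := by
  have hprod : ∀ w, ∏ Y ∈ Wᶜ, parentCond Pa p Y w =
      parentCond Pa p X w * ∏ Y ∈ (insert X W)ᶜ, parentCond Pa p Y w := fun w => by
    rw [compl_insert, mul_prod_erase _ (fun Y => parentCond Pa p Y w) (mem_compl.2 hX)]
  rw [tailMass, ← sum_marg_insert_update hX]
  simp only [hprod]
  exact sum_congr rfl fun x _ => marg_mul_left fun w hw =>
    parentCond_congr fun v hv => hw v (insert_subset_insert X hPaX hv)

theorem tailMass_le_one (hp : ∀ u, 0 ≤ p u) (hacyc : Acyclic adj)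
    (hPa : ∀ X v, v ∈ Pa X ↔ adj v X) (W : Finset V) (u : ∀ v, vals v) :
    tailMass Pa p W u ≤ 1 := by
  obtain rfl | hW := eq_or_ne W univ
  · simp [tailMass, marg_univ]
  have hne : Wᶜ.Nonempty := by rwa [nonempty_iff_ne_empty, Ne, compl_eq_empty_iff]
  obtain ⟨X, hXW, hX⟩ := hacyc.exists_mem_forall_not_adj hne
  have hPaX : Pa X ⊆ W := fun v hv =>
    by_contra fun hvW => hX v (mem_compl.2 hvW) ((hPa X v).1 hv)
  rw [mem_compl] at hXW
  rw [tailMass_eq_sum hXW hPaX]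
  calc _ ≤ ∑ x, parentCond Pa p X (update u X x) :=
        sum_le_sum fun x _ => mul_le_of_le_one_right (parentCond_nonneg hp _ _)
          (tailMass_le_one hp hacyc hPa _ _)
    _ ≤ 1 := sum_parentCond_update_le_one (hacyc.notMem_parents hPa X) u
termination_by Wᶜ.card
decreasing_by
  rw [compl_insert]
  exact card_erase_lt_of_mem hXW

theorem marg_eq_prod_mul_tailMass (hfact : ∀ u, p u = ∏ X, parentCond Pa p X u) {W : Finset V}
    (hW : IsAncestral Pa W) (u : ∀ v, vals v) :
    Marg p W u = (∏ Y ∈ W, parentCond Pa p Y u) * tailMass Pa p W u := by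
  calc Marg p W u = Marg (fun w => (∏ Y ∈ W, parentCond Pa p Y w) *
        ∏ Y ∈ Wᶜ, parentCond Pa p Y w) W u := by
        congr 1
        funext w
        rw [hfact, prod_mul_prod_compl]
    _ = _ := marg_mul_left fun w hw =>
        prod_congr rfl fun Y hY => parentCond_congr fun v hv => hw v (insert_subset hY (hW Y hY) hv)

theorem marg_insert_eq_prod_parentCond (hp : ∀ u, 0 ≤ p u) (hacyc : Acyclic adj)
    (hPa : ∀ X v, v ∈ Pa X ↔ adj v X) (hfact : ∀ u, p u = ∏ X, parentCond Pa p X u)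
    {W : Finset V} {X : V} {u : ∀ v, vals v} (hW : IsAncestral Pa W) (hX : X ∉ W)
    (hPaX : Pa X ⊆ W) (h : Marg p W u = ∏ Y ∈ W, parentCond Pa p Y u) :
    Marg p (insert X W) u = ∏ Y ∈ insert X W, parentCond Pa p Y u := by
  set q := ∏ Y ∈ W, parentCond Pa p Y u
  have hq : q * tailMass Pa p W u = q := by rw [← marg_eq_prod_mul_tailMass hfact hW, h]
  /- With `q * tailMass W = q`, `tailMass ≤ 1` and `∑ₓ parentCond X ≤ 1`, every term
  `q * parentCond X * (1 - tailMass (insert X W))` of a nonnegative sum with nonpositive total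
  vanishes. -/
  have hterm : ∀ x, 0 ≤ q * (parentCond Pa p X (update u X x) *
      (1 - tailMass Pa p (insert X W) (update u X x))) := fun x =>
    mul_nonneg (prod_nonneg fun Y _ => parentCond_nonneg hp Y u)
      (mul_nonneg (parentCond_nonneg hp X _) (sub_nonneg.2 (tailMass_le_one hp hacyc hPa _ _)))
  have hle : ∑ x, q * (parentCond Pa p X (update u X x) *
      (1 - tailMass Pa p (insert X W) (update u X x))) ≤ 0 := by
    calc _ = q * (∑ x, parentCond Pa p X (update u X x) - 1) := by
          simp only [mul_sub, mul_one, sum_sub_distrib, ← mul_sum, ← tailMass_eq_sum hX hPaX, hq]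
      _ ≤ 0 := mul_nonpos_of_nonneg_of_nonpos (prod_nonneg fun Y _ => parentCond_nonneg hp Y u)
          (sub_nonpos.2 (sum_parentCond_update_le_one (hacyc.notMem_parents hPa X) u))
  have hzero := (sum_eq_zero_iff_of_nonneg fun x _ => hterm x).1
    (le_antisymm hle (sum_nonneg fun x _ => hterm x)) (u X) (mem_univ _)
  rw [update_eq_self] at hzero
  rw [marg_eq_prod_mul_tailMass hfact (hW.insert hPaX), prod_insert hX]
  linear_combination -hzero

theorem marg_eq_prod_parentCond (hp : ∀ u, 0 ≤ p u) (hsum : ∑ u, p u = 1) (hacyc : Acyclic adj)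
    (hPa : ∀ X v, v ∈ Pa X ↔ adj v X) (hfact : ∀ u, p u = ∏ X, parentCond Pa p X u)
    (W : Finset V) (hW : IsAncestral Pa W) (u : ∀ v, vals v) :
    Marg p W u = ∏ Y ∈ W, parentCond Pa p Y u := by
  induction W using Finset.strongInduction generalizing u with
  | H W ih =>
  obtain rfl | hne := W.eq_empty_or_nonempty
  · rw [marg_empty, hsum, prod_empty]
  obtain ⟨X, hXW, hX⟩ := hacyc.swap.exists_mem_forall_not_adj hne
  have hW' : IsAncestral Pa (W.erase X) := fun Y hY v hv =>
    mem_erase.2 ⟨by rintro rfl; exact hX Y (mem_of_mem_erase hY) ((hPa Y v).1 hv),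
      hW Y (mem_of_mem_erase hY) hv⟩
  have hPaX : Pa X ⊆ W.erase X := fun v hv =>
    mem_erase.2 ⟨by rintro rfl; exact hacyc.notMem_parents hPa _ hv, hW X hXW hv⟩
  rw [← insert_erase hXW]
  exact marg_insert_eq_prod_parentCond hp hacyc hPa hfact hW' (notMem_erase X W) hPaX
    (ih _ (erase_ssubset hXW) hW' u)

end Factorization

section ConditionalIndependence

open Finset

variable {V : Type*} [Fintype V] [DecidableEq V] {vals : V → Type*} [∀ v, Fintype (vals v)]
  {adj : V → V → Prop} {Pa : V → Finset V} {p g h : (∀ v, vals v) → ℝ} {S T : Finset V}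

theorem marg_union_eq_mul {WS WT : Finset V} (hU : ∀ u, Marg p (S ∪ T) u = g u * h u)
    (hg : ∀ u u', (∀ v ∈ S, u v = u' v) → g u = g u')
    (hh : ∀ u u', (∀ v ∈ T, u v = u' v) → h u = h u')
    (hWS : WS ⊆ S) (hWT : WT ⊆ T) (hSWS : S ∩ T ⊆ WS) (hTWT : S ∩ T ⊆ WT)
    (f : ∀ v, vals v) :
    Marg p (WS ∪ WT) f = Marg g (WS ∪ Sᶜ) f * Marg h (WT ∪ Tᶜ) f := by
  have hmem : ∀ v, v ∈ S → v ∈ T → v ∈ WS ∧ v ∈ WT := fun v h1 h2 =>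
    ⟨hSWS (mem_inter.2 ⟨h1, h2⟩), hTWT (mem_inter.2 ⟨h1, h2⟩)⟩
  have hW : ∀ v, (v ∈ WS → v ∈ S) ∧ (v ∈ WT → v ∈ T) := fun v => ⟨@hWS v, @hWT v⟩
  calc Marg p (WS ∪ WT) f = Marg (Marg p (S ∪ T)) (WS ∪ WT ∪ (S ∪ T)ᶜ) f := by
        rw [marg_marg]
        · congr 1; ext v; simp only [mem_inter, mem_union, mem_compl]; grind
        · ext v; simp only [mem_union, mem_compl, mem_univ, iff_true]; tauto
    _ = Marg (fun u => g u * h u) ((WS ∪ Sᶜ) ∩ (WT ∪ Tᶜ)) f := by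
        congr 1
        · exact funext hU
        · ext v; simp only [mem_inter, mem_union, mem_compl]; grind
    _ = _ := by
        refine marg_mul ?_ (fun u u' huu => hg u u' fun v hv => ?_)
          (fun u u' huu => hh u u' fun v hv => ?_) f
        · ext v; simp only [mem_union, mem_compl, mem_univ, iff_true]; grind
        · exact huu v (by simp only [mem_union, mem_compl]; grind)
        · exact huu v (by simp only [mem_union, mem_compl]; grind)

theorem ci_of_marg_eq_mul {A B Z : Finset V} (hU : ∀ u, Marg p (S ∪ T) u = g u * h u)
    (hg : ∀ u u', (∀ v ∈ S, u v = u' v) → g u = g u')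
    (hh : ∀ u u', (∀ v ∈ T, u v = u' v) → h u = h u')
    (hA : A ∪ Z ⊆ S) (hB : B ∪ Z ⊆ T) (hST : S ∩ T ⊆ Z) : CI p A B Z := by
  intro f
  have hZS : Z ⊆ S := subset_union_right.trans hA
  have hZT : Z ⊆ T := subset_union_right.trans hB
  have hZA : S ∩ T ⊆ A ∪ Z := hST.trans subset_union_right
  have hZB : S ∩ T ⊆ B ∪ Z := hST.trans subset_union_right
  have key := fun WS WT => marg_union_eq_mul (WS := WS) (WT := WT) (f := f) hU hg hh
  have e₁ := key _ _ hA hB hZA hZB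
  have e₂ := key _ _ hZS hZT hST hST
  have e₃ := key _ _ hA hZT hZA hST
  have e₄ := key _ _ hZS hB hST hZB
  rw [union_self] at e₂
  rw [union_assoc, union_self] at e₃
  rw [show Z ∪ (B ∪ Z) = B ∪ Z by grind] at e₄
  rw [show A ∪ B ∪ Z = A ∪ Z ∪ (B ∪ Z) by grind, e₁, e₂, e₃, e₄]
  ring

theorem ci_of_families_subset (hp : ∀ u, 0 ≤ p u) (hsum : ∑ u, p u = 1) (hacyc : Acyclic adj)
    (hPa : ∀ X v, v ∈ Pa X ↔ adj v X) (hfact : ∀ u, p u = ∏ X, parentCond Pa p X u)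
    {A B Z : Finset V} (hanc : IsAncestral Pa (S ∪ T))
    (hfam : ∀ Y ∈ S ∪ T, insert Y (Pa Y) ⊆ S ∨ insert Y (Pa Y) ⊆ T)
    (hA : A ∪ Z ⊆ S) (hB : B ∪ Z ⊆ T) (hST : S ∩ T ⊆ Z) : CI p A B Z := by
  refine ci_of_marg_eq_mul
    (g := fun u => ∏ Y ∈ (S ∪ T).filter (fun Y => insert Y (Pa Y) ⊆ S), parentCond Pa p Y u)
    (h := fun u => ∏ Y ∈ (S ∪ T).filter (fun Y => ¬ insert Y (Pa Y) ⊆ S), parentCond Pa p Y u)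
    (fun u => ?_) ?_ ?_ hA hB hST
  · rw [marg_eq_prod_parentCond hp hsum hacyc hPa hfact _ hanc, prod_filter_mul_prod_filter_not]
  · exact fun u u' huu => prod_congr rfl fun Y hY =>
      parentCond_congr fun v hv => huu v ((mem_filter.1 hY).2 hv)
  · exact fun u u' huu => prod_congr rfl fun Y hY =>
      parentCond_congr fun v hv => huu v ((hfam Y (mem_filter.1 hY).1).resolve_left
        (mem_filter.1 hY).2 hv)

end ConditionalIndependence

section ActiveWalks

variable {V : Type*} {adj : V → V → Prop} {Z : Set V}

def ActiveAt (adj : V → V → Prop) (Z : Set V) (a x b : V) : Prop :=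
  (adj a x ∧ adj b x → ∃ d ∈ Z, ReflTransGen adj x d) ∧ (¬ (adj a x ∧ adj b x) → x ∉ Z)

def ActiveTriples (adj : V → V → Prop) (Z : Set V) : List V → Prop
  | a :: x :: b :: l => ActiveAt adj Z a x b ∧ ActiveTriples adj Z (x :: b :: l)
  | _ => True

def IsActiveWalk (adj : V → V → Prop) (Z : Set V) (l : List V) : Prop :=
  l.IsChain (SymmGen adj) ∧ ActiveTriples adj Z l

def HasActiveWalk (adj : V → V → Prop) (Z : Set V) (x y : V) : Prop :=
  ∃ l, IsActiveWalk adj Z (x :: l) ∧ (x :: l).getLast? = some y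

theorem activeAt_of_not_collider {a x b : V} (hx : x ∉ Z) (h : ¬ (adj a x ∧ adj b x)) :
    ActiveAt adj Z a x b :=
  ⟨fun hc => absurd hc h, fun _ => hx⟩

theorem activeAt_of_reflTransGen {a x b : V} (hx : x ∉ Z) (hd : ∃ d ∈ Z, ReflTransGen adj x d) :
    ActiveAt adj Z a x b :=
  ⟨fun _ => hd, fun _ => hx⟩

theorem activeAt_of_mem {a x b : V} (hx : x ∈ Z) (hax : adj a x) (hbx : adj b x) :
    ActiveAt adj Z a x b :=
  ⟨fun _ => ⟨x, hx, .refl⟩, fun h => absurd ⟨hax, hbx⟩ h⟩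

theorem activeTriples_iff_getElem? : ∀ {l : List V}, ActiveTriples adj Z l ↔
    ∀ i a x b, l[i]? = some a → l[i + 1]? = some x → l[i + 2]? = some b → ActiveAt adj Z a x b
  | a :: x :: b :: l => by
    rw [ActiveTriples, activeTriples_iff_getElem?]
    constructor
    · rintro ⟨h₀, h⟩ (_ | i) a' x' b' ha hx hb
      · simp only [List.getElem?_cons_zero, List.getElem?_cons_succ, Option.some.injEq] at ha hx hb
        exact ha ▸ hx ▸ hb ▸ h₀
      · exact h i a' x' b' ha hx hb
    · exact fun h => ⟨h 0 a x b rfl rfl rfl, fun i => h (i + 1)⟩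
  | [] | [_] | [_, _] => by simp [ActiveTriples]

theorem getElem?_take_append_drop_of_le {l : List V} {i j : ℕ} (hi : i < l.length) {k : ℕ}
    (hk : k ≤ i) :
    (l.take (i + 1) ++ l.drop (j + 1))[k]? = l[k]? := by
  rw [List.getElem?_append_left (by simp only [List.length_take]; omega),
    List.getElem?_take_of_lt (by omega)]

theorem getElem?_take_append_drop_of_ge {l : List V} {i j : ℕ} (hij : i ≤ j)
    (hj : j < l.length) (heq : l[i]? = l[j]?) {k : ℕ} (hk : i ≤ k) :
    (l.take (i + 1) ++ l.drop (j + 1))[k]? = l[k + (j - i)]? := by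
  rcases hk.eq_or_lt with rfl | hk
  · rw [getElem?_take_append_drop_of_le (by omega) le_rfl, heq, show i + (j - i) = j by omega]
  · rw [List.getElem?_append_right (by simp only [List.length_take]; omega), List.getElem?_drop]
    congr 1
    simp only [List.length_take]
    omega

namespace IsActiveWalk

variable {l : List V}

theorem singleton (x : V) : IsActiveWalk adj Z [x] :=
  ⟨.singleton x, trivial⟩

theorem cons {b c : V} (hl : IsActiveWalk adj Z (b :: l)) (hcb : SymmGen adj c b)
    (hact : ∀ x ∈ l.head?, ActiveAt adj Z c b x) : IsActiveWalk adj Z (c :: b :: l) := by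
  cases l with
  | nil => exact ⟨.cons_cons hcb (.singleton b), trivial⟩
  | cons x l => exact ⟨.cons_cons hcb hl.1, hact x rfl, hl.2⟩

theorem symmGen (h : IsActiveWalk adj Z l) {i : ℕ} {a b : V} (ha : l[i]? = some a)
    (hb : l[i + 1]? = some b) : SymmGen adj a b := by
  obtain ⟨hi, rfl⟩ := List.getElem?_eq_some_iff.1 hb
  obtain ⟨_, rfl⟩ := List.getElem?_eq_some_iff.1 ha
  exact h.1.getElem i hi

theorem activeAt (h : IsActiveWalk adj Z l) {i : ℕ} {a x b : V} (ha : l[i]? = some a)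
    (hx : l[i + 1]? = some x) (hb : l[i + 2]? = some b) : ActiveAt adj Z a x b :=
  activeTriples_iff_getElem?.1 h.2 i a x b ha hx hb

theorem of_getElem?
    (hE : ∀ i a b, l[i]? = some a → l[i + 1]? = some b → SymmGen adj a b)
    (hT : ∀ i a x b, l[i]? = some a → l[i + 1]? = some x → l[i + 2]? = some b →
      ActiveAt adj Z a x b) : IsActiveWalk adj Z l :=
  ⟨List.isChain_iff_getElem.2 fun i hi =>
    hE i _ _ (List.getElem?_eq_getElem (by omega)) (List.getElem?_eq_getElem hi),
    activeTriples_iff_getElem?.2 hT⟩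

theorem exists_mem_transGen_or_forward (h : IsActiveWalk adj Z l) {i : ℕ} {v : V}
    (hv : l[i]? = some v) (hout : ∀ y, l[i + 1]? = some y → adj v y) :
    ∀ k t, l[i + k + 1]? = some t → (∃ d ∈ Z, TransGen adj v d) ∨
      (TransGen adj v t ∧ ∀ s, l[i + k]? = some s → adj s t)
  | 0, t, ht => .inr ⟨.single (hout t ht), fun s hs => by
      obtain rfl : v = s := Option.some.inj (hv.symm.trans hs)
      exact hout t ht⟩
  | k + 1, t', ht' => by
    have hk : i + k + 1 < l.length := by
      have := (List.getElem?_eq_some_iff.1 ht').1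
      omega
    have ht : l[i + k + 1]? = some l[i + k + 1] := List.getElem?_eq_getElem hk
    rcases exists_mem_transGen_or_forward h hv hout k _ ht with hd | ⟨hvt, hst⟩
    · exact .inl hd
    rcases h.symmGen ht ht' with htt' | ht't
    · refine .inr ⟨hvt.tail htt', fun s hs => ?_⟩
      obtain rfl : l[i + k + 1] = s := Option.some.inj (ht.symm.trans hs)
      exact htt'
    · have hs : l[i + k]? = some l[i + k] := List.getElem?_eq_getElem (by omega)
      obtain ⟨d, hd, htd⟩ := (h.activeAt hs ht ht').1 ⟨hst _ hs, ht't⟩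
      exact .inl ⟨d, hd, hvt.trans_left htd⟩

theorem exists_mem_reflTransGen_of_return (hacyc : Acyclic adj) (h : IsActiveWalk adj Z l)
    {i j : ℕ} {v : V} (hij : i < j) (hv : l[i]? = some v) (hvj : l[j]? = some v)
    (hout : ∀ y, l[i + 1]? = some y → adj v y) : ∃ d ∈ Z, ReflTransGen adj v d := by
  obtain ⟨k, rfl⟩ : ∃ k, j = i + k + 1 := ⟨j - i - 1, by omega⟩
  rcases h.exists_mem_transGen_or_forward hv hout k v hvj with ⟨d, hd, hvd⟩ | ⟨hvv, -⟩
  · exact ⟨d, hd, hvd.to_reflTransGen⟩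
  · exact absurd hvv (hacyc v)

/- Cutting the loop `l[k+1] … l[j]` out of an active walk keeps `v` active: if `v` becomes a
collider without being one before, the loop leaves `v` along an out-edge and, being closed, must
meet a collider below `v`, which is active, so a descendant of `v` lies in `Z`. -/
theorem activeAt_of_getElem?_eq (hacyc : Acyclic adj) (h : IsActiveWalk adj Z l) {k j : ℕ}
    {a v b : V} (hkj : k + 1 < j) (ha : l[k]? = some a) (hv : l[k + 1]? = some v)
    (hvj : l[j]? = some v) (hb : l[j + 1]? = some b) : ActiveAt adj Z a v b := by
  have hjlen : j + 1 < l.length := (List.getElem?_eq_some_iff.1 hb).1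
  have hy : l[k + 2]? = some l[k + 2] := List.getElem?_eq_getElem (by omega)
  have hs : l[j - 1]? = some l[j - 1] := List.getElem?_eq_getElem (by omega)
  have h₁ := h.activeAt ha hv hy
  have h₂ := h.activeAt hs (by rwa [Nat.sub_add_cancel (by omega)])
    (by rwa [show j - 1 + 2 = j + 1 by omega])
  refine ⟨fun ⟨hav, hbv⟩ => ?_, fun hnc => ?_⟩
  · by_cases hyv : adj l[k + 2] v
    · exact h₁.1 ⟨hav, hyv⟩
    · refine h.exists_mem_reflTransGen_of_return hacyc hkj hv hvj fun y hy' => ?_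
      obtain rfl : l[k + 2] = y := Option.some.inj (hy.symm.trans hy')
      exact (h.symmGen hv hy).resolve_right hyv
  · by_cases hav : adj a v
    · exact h₂.2 fun hc => hnc ⟨hav, hc.2⟩
    · exact h₁.2 fun hc => hav hc.1

theorem exists_shorter (hacyc : Acyclic adj) (h : IsActiveWalk adj Z l) {i j : ℕ} (hij : i < j)
    (hj : j < l.length) (heq : l[i]? = l[j]?) :
    ∃ q, IsActiveWalk adj Z q ∧ q.head? = l.head? ∧ q.getLast? = l.getLast? ∧
      q.length < l.length := by
  have hlow : ∀ {k}, k ≤ i → (l.take (i + 1) ++ l.drop (j + 1))[k]? = l[k]? :=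
    getElem?_take_append_drop_of_le (by omega)
  have hhigh : ∀ {k}, i ≤ k → (l.take (i + 1) ++ l.drop (j + 1))[k]? = l[k + (j - i)]? :=
    getElem?_take_append_drop_of_ge hij.le hj heq
  have hlen : (l.take (i + 1) ++ l.drop (j + 1)).length = l.length - (j - i) := by
    simp only [List.length_append, List.length_take, List.length_drop]
    omega
  refine ⟨l.take (i + 1) ++ l.drop (j + 1),
    of_getElem? (fun k a b ha hb => ?_) (fun k a x b ha hx hb => ?_), ?_, ?_, ?_⟩
  · rcases lt_or_ge k i with hk | hk
    · rw [hlow hk.le] at ha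
      rw [hlow hk] at hb
      exact h.symmGen ha hb
    · rw [hhigh hk] at ha
      rw [hhigh (by omega), show k + 1 + (j - i) = k + (j - i) + 1 by omega] at hb
      exact h.symmGen ha hb
  · rcases lt_trichotomy (k + 1) i with hk | hk | hk
    · rw [hlow (by omega)] at ha
      rw [hlow hk.le] at hx
      rw [hlow hk] at hb
      exact h.activeAt ha hx hb
    · rw [hlow (by omega)] at ha
      rw [hlow hk.le] at hx
      rw [hhigh (by omega), show k + 2 + (j - i) = j + 1 by omega] at hb
      exact h.activeAt_of_getElem?_eq hacyc (hk ▸ hij) ha hx (by rw [← heq, ← hk]; exact hx) hb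
    · rw [hhigh (by omega)] at ha
      rw [hhigh (by omega), show k + 1 + (j - i) = k + (j - i) + 1 by omega] at hx
      rw [hhigh (by omega), show k + 2 + (j - i) = k + (j - i) + 2 by omega] at hb
      exact h.activeAt ha hx hb
  · rw [List.head?_eq_getElem?, List.head?_eq_getElem?, hlow (Nat.zero_le _)]
  · rw [List.getLast?_eq_getElem?, List.getLast?_eq_getElem?, hhigh (by omega), hlen]
    congr 1
    omega
  · omega

theorem exists_nodup (hacyc : Acyclic adj) {l : List V} (h : IsActiveWalk adj Z l) :
    ∃ q, IsActiveWalk adj Z q ∧ q.head? = l.head? ∧ q.getLast? = l.getLast? ∧ q.Nodup := by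
  by_cases hnd : l.Nodup
  · exact ⟨l, h, rfl, rfl, hnd⟩
  obtain ⟨i, j, hij, hj, heq⟩ : ∃ i j, i < j ∧ j < l.length ∧ l[i]? = l[j]? := by
    simpa [List.nodup_iff_getElem?_ne_getElem?] using hnd
  obtain ⟨q, hq, hhead, hlast, hlen⟩ := h.exists_shorter hacyc hij hj heq
  obtain ⟨r, hr, h₁, h₂, h₃⟩ := exists_nodup hacyc hq
  exact ⟨r, hr, h₁.trans hhead, h₂.trans hlast, h₃⟩
termination_by l.length

end IsActiveWalk

theorem HasActiveWalk.refl (x : V) : HasActiveWalk adj Z x x :=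
  ⟨[], .singleton x, rfl⟩

theorem ActiveTriples.not_blocked {l : List V} (h : ActiveTriples adj Z l) :
    ¬ Blocked adj Z l := by
  rintro ⟨i, x, hi, hlen, hx, hblock⟩
  obtain ⟨j, rfl⟩ : ∃ j, i = j + 1 := ⟨i - 1, by omega⟩
  have ha : l[j]? = some l[j] := List.getElem?_eq_getElem (by omega)
  have hb : l[j + 2]? = some l[j + 2] := List.getElem?_eq_getElem hlen
  have hact := activeTriples_iff_getElem?.1 h j _ x _ ha hx hb
  have hcol : ColliderAt adj l (j + 1) ↔ adj l[j] x ∧ adj l[j + 2] x := by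
    refine ⟨fun ⟨a, x', b, ha', hx', hb', hax, hbx⟩ => ?_, fun hc => ⟨_, x, _, ha, hx, hb, hc⟩⟩
    obtain rfl : l[j] = a := Option.some.inj (ha.symm.trans ha')
    obtain rfl : x = x' := Option.some.inj (hx.symm.trans hx')
    obtain rfl : l[j + 2] = b := Option.some.inj (hb.symm.trans hb')
    exact ⟨hax, hbx⟩
  rcases hblock with ⟨hnc, hxZ⟩ | ⟨hc, hxZ, hdesc⟩
  · exact hact.2 (mt hcol.2 hnc) hxZ
  · obtain ⟨d, hd, hxd⟩ := hact.1 (hcol.1 hc)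
    rcases reflTransGen_iff_eq_or_transGen.1 hxd with rfl | hxd
    · exact hxZ hd
    · exact hdesc d hxd hd

theorem not_hasActiveWalk_of_dSep (hacyc : Acyclic adj) {M N : V} (hMN : M ≠ N)
    (hsep : DSep adj Z M N) : ¬ HasActiveWalk adj Z M N := by
  rintro ⟨l, hl, hlast⟩
  obtain ⟨q, hq, hhead, hqlast, hnd⟩ := hl.exists_nodup hacyc
  have hlen : 2 ≤ q.length := by
    match q, hhead, hqlast with
    | [], h, _ => simp at h
    | [_], h₁, h₂ =>
      exact absurd ((Option.some.inj h₁).symm.trans (Option.some.inj (h₂.trans hlast))) hMN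
    | _ :: _ :: _, _, _ => simp
  exact hq.2.not_blocked (hsep q ⟨hq.1, hhead, hqlast.trans hlast, hnd, hlen⟩)

end ActiveWalks

section MoralGraph

variable {V : Type*} {adj : V → V → Prop} {Z : Set V} {M N : V}

def MoralAdj (adj : V → V → Prop) (U Z : Set V) (a b : V) : Prop :=
  a ∈ U ∧ b ∈ U ∧ a ∉ Z ∧ b ∉ Z ∧ (SymmGen adj a b ∨ ∃ c ∈ U, adj a c ∧ adj b c)

theorem exists_activeWalk_of_reflTransGen (hacyc : Acyclic adj) {b : V}
    (h : ReflTransGen adj b N) : (∃ d ∈ Z, ReflTransGen adj b d) ∨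
      ∃ l, IsActiveWalk adj Z (b :: l) ∧ (b :: l).getLast? = some N ∧ ∀ x ∈ l.head?, adj b x := by
  induction h using ReflTransGen.head_induction_on with
  | refl => exact .inr ⟨[], IsActiveWalk.singleton N, rfl, by simp⟩
  | @head b e hbe _ ih =>
    by_cases he : e ∈ Z
    · exact .inl ⟨e, he, .single hbe⟩
    rcases ih with ⟨d, hd, hed⟩ | ⟨l, hl, hlast, hout⟩
    · exact .inl ⟨d, hd, .head hbe hed⟩
    · refine .inr ⟨e :: l, hl.cons (.inl hbe) fun x hx => ?_, by rwa [List.getLast?_cons_cons],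
        by simp [hbe]⟩
      exact activeAt_of_not_collider he fun h => hacyc.asymm (hout x hx) h.2

theorem exists_mem_reflTransGen_of_hasActiveWalk (hacyc : Acyclic adj)
    (hno : ¬ HasActiveWalk adj Z M N) {b : V} (h : ReflTransGen adj b M) {l : List V}
    (hl : IsActiveWalk adj Z (b :: l)) (hlast : (b :: l).getLast? = some N) (hb : b ∉ Z) :
    ∃ d ∈ Z, ReflTransGen adj b d := by
  induction h using ReflTransGen.head_induction_on generalizing l with
  | refl => exact absurd ⟨l, hl, hlast⟩ hno
  | @head b e hbe _ ih =>
    by_cases he : e ∈ Z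
    · exact ⟨e, he, .single hbe⟩
    have hl' := hl.cons (.inr hbe) fun x _ =>
      activeAt_of_not_collider hb fun h => hacyc.asymm hbe h.1
    obtain ⟨d, hd, hed⟩ := ih hl' (by rwa [List.getLast?_cons_cons]) he
    exact ⟨d, hd, .head hbe hed⟩

/- If `b` is an ancestor of `Z` it is active whatever precedes it; if it is an ancestor of `N` we
restart along a directed path to `N`; an ancestor of `M` would give an active walk from `M`. -/
theorem exists_activeWalk_activeAt (hacyc : Acyclic adj) (hno : ¬ HasActiveWalk adj Z M N)
    {b : V} (hb : ∃ t ∈ insert M (insert N Z), ReflTransGen adj b t) (hbZ : b ∉ Z)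
    (hw : HasActiveWalk adj Z b N) : ∃ l, IsActiveWalk adj Z (b :: l) ∧
      (b :: l).getLast? = some N ∧ ∀ c, ∀ x ∈ l.head?, ActiveAt adj Z c b x := by
  obtain ⟨l, hl, hlast⟩ := hw
  have of_anc : (∃ d ∈ Z, ReflTransGen adj b d) → ∃ l, IsActiveWalk adj Z (b :: l) ∧
      (b :: l).getLast? = some N ∧ ∀ c, ∀ x ∈ l.head?, ActiveAt adj Z c b x :=
    fun hd => ⟨l, hl, hlast, fun _ _ _ => activeAt_of_reflTransGen hbZ hd⟩
  obtain ⟨t, ht, hbt⟩ := hb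
  rcases ht with rfl | rfl | ht
  · exact of_anc (exists_mem_reflTransGen_of_hasActiveWalk hacyc hno hbt hl hlast hbZ)
  · rcases exists_activeWalk_of_reflTransGen hacyc hbt with hd | ⟨l', hl', hlast', hout⟩
    · exact of_anc hd
    · exact ⟨l', hl', hlast', fun c x hx =>
        activeAt_of_not_collider hbZ fun h => hacyc.asymm (hout x hx) h.2⟩
  · exact of_anc ⟨t, ht, hbt⟩

theorem HasActiveWalk.cons (hacyc : Acyclic adj) (hno : ¬ HasActiveWalk adj Z M N) {b c : V}
    (hw : HasActiveWalk adj Z b N) (hb : ∃ t ∈ insert M (insert N Z), ReflTransGen adj b t)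
    (hbZ : b ∉ Z) (hcb : SymmGen adj c b) : HasActiveWalk adj Z c N := by
  obtain ⟨l, hl, hlast, hact⟩ := exists_activeWalk_activeAt hacyc hno hb hbZ hw
  exact ⟨b :: l, hl.cons hcb (hact c), by rwa [List.getLast?_cons_cons]⟩

theorem hasActiveWalk_of_reflTransGen_moralAdj (hacyc : Acyclic adj)
    (hno : ¬ HasActiveWalk adj Z M N) {U : Set V}
    (hU : ∀ b ∈ U, ∃ t ∈ insert M (insert N Z), ReflTransGen adj b t) {v : V}
    (h : ReflTransGen (MoralAdj adj U Z) v N) : HasActiveWalk adj Z v N := by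
  induction h using ReflTransGen.head_induction_on with
  | refl => exact .refl N
  | @head c b hcb _ ih =>
    obtain ⟨-, hbU, -, hbZ, hcb | ⟨d, hdU, hcd, hbd⟩⟩ := hcb
    · exact ih.cons hacyc hno (hU b hbU) hbZ hcb
    by_cases hdZ : d ∈ Z
    · obtain ⟨l, hl, hlast, hact⟩ := exists_activeWalk_activeAt hacyc hno (hU b hbU) hbZ ih
      refine ⟨d :: b :: l, (hl.cons (.inr hbd) (hact d)).cons (.inl hcd) ?_, ?_⟩
      · rintro x ⟨⟩
        exact activeAt_of_mem hdZ hcd hbd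
      · simpa [List.getLast?_cons_cons] using hlast
    · exact (ih.cons hacyc hno (hU b hbU) hbZ (.inr hbd)).cons hacyc hno (hU d hdU) hdZ
        (.inl hcd)

theorem not_reflTransGen_moralAdj (hacyc : Acyclic adj) (hMN : M ≠ N) (hsep : DSep adj Z M N)
    {U : Set V} (hU : ∀ b ∈ U, ∃ t ∈ insert M (insert N Z), ReflTransGen adj b t) :
    ¬ ReflTransGen (MoralAdj adj U Z) M N := fun h =>
  not_hasActiveWalk_of_dSep hacyc hMN hsep <|
    hasActiveWalk_of_reflTransGen_moralAdj hacyc (not_hasActiveWalk_of_dSep hacyc hMN hsep) hU h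

end MoralGraph

section GlobalMarkov

open Finset

variable {V : Type*} {adj : V → V → Prop} {Pa : V → Finset V}

noncomputable def ancestralClosure [Fintype V] (adj : V → V → Prop) (s : Set V) : Finset V :=
  univ.filter fun v => ∃ t ∈ s, ReflTransGen adj v t

theorem mem_ancestralClosure [Fintype V] {s : Set V} {v : V} :
    v ∈ ancestralClosure adj s ↔ ∃ t ∈ s, ReflTransGen adj v t := by
  simp [ancestralClosure]

theorem mem_ancestralClosure_of_mem [Fintype V] {s : Set V} {t : V} (ht : t ∈ s) :
    t ∈ ancestralClosure adj s :=
  mem_ancestralClosure.2 ⟨t, ht, .refl⟩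

theorem isAncestral_ancestralClosure [Fintype V] (hPa : ∀ X v, v ∈ Pa X ↔ adj v X) (s : Set V) :
    IsAncestral Pa (ancestralClosure adj s) := fun Y hY v hv => by
  obtain ⟨t, ht, hYt⟩ := mem_ancestralClosure.1 hY
  exact mem_ancestralClosure.2 ⟨t, ht, .head ((hPa Y v).1 hv) hYt⟩

variable [DecidableEq V]

theorem moralAdj_of_mem_insert_parents (hPa : ∀ X v, v ∈ Pa X ↔ adj v X) {U Z : Finset V}
    (hU : IsAncestral Pa U) {Y a b : V} (hY : Y ∈ U) (ha : a ∈ insert Y (Pa Y))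
    (hb : b ∈ insert Y (Pa Y)) (hab : a ≠ b) (haZ : a ∉ Z) (hbZ : b ∉ Z) :
    MoralAdj adj U Z a b := by
  have hfam : insert Y (Pa Y) ⊆ U := insert_subset hY (hU Y hY)
  refine ⟨hfam ha, hfam hb, haZ, hbZ, ?_⟩
  rcases mem_insert.1 ha with rfl | ha <;> rcases mem_insert.1 hb with rfl | hb
  · exact absurd rfl hab
  · exact .inl (.inr ((hPa _ _).1 hb))
  · exact .inl (.inl ((hPa _ _).1 ha))
  · exact .inr ⟨Y, hY, (hPa _ _).1 ha, (hPa _ _).1 hb⟩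

theorem insert_parents_subset_sdiff_or_subset (hPa : ∀ X v, v ∈ Pa X ↔ adj v X)
    {U Z R : Finset V} (hU : IsAncestral Pa U) (hRZ : ∀ r ∈ R, r ∉ Z)
    (hR : ∀ r ∈ R, ∀ t, MoralAdj adj U Z t r → t ∈ R) {Y : V} (hY : Y ∈ U) :
    insert Y (Pa Y) ⊆ U \ R ∨ insert Y (Pa Y) ⊆ Z ∪ R := by
  by_cases hYR : ∃ r ∈ insert Y (Pa Y), r ∈ R
  · obtain ⟨r, hr, hrR⟩ := hYR
    refine .inr fun t ht => mem_union.2 ?_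
    by_cases htZ : t ∈ Z
    · exact .inl htZ
    obtain rfl | htr := eq_or_ne t r
    · exact .inr hrR
    exact .inr (hR r hrR t (moralAdj_of_mem_insert_parents hPa hU hY ht hr htr htZ (hRZ r hrR)))
  · push Not at hYR
    exact .inl fun t ht => mem_sdiff.2 ⟨insert_subset hY (hU Y hY) ht, hYR t ht⟩

theorem ci_of_not_reflTransGen_moralAdj [Fintype V] {vals : V → Type*} [∀ v, Fintype (vals v)]
    {p : (∀ v, vals v) → ℝ} (hp : ∀ u, 0 ≤ p u) (hsum : ∑ u, p u = 1)
    (hacyc : Acyclic adj) (hPa : ∀ X v, v ∈ Pa X ↔ adj v X)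
    (hfact : ∀ u, p u = ∏ X, parentCond Pa p X u) {U Z : Finset V} {M N : V}
    (hU : IsAncestral Pa U) (hMU : M ∈ U) (hNU : N ∈ U) (hZU : Z ⊆ U) (hN : N ∉ Z)
    (hMN : ¬ ReflTransGen (MoralAdj adj U Z) M N) : CI p {M} {N} Z := by
  set R := U.filter fun v => ReflTransGen (MoralAdj adj U Z) v N
  have hRU : R ⊆ U := filter_subset _ U
  have hRZ : ∀ r ∈ R, r ∉ Z := fun r hr hrZ => by
    rcases (mem_filter.1 hr).2.cases_head with rfl | ⟨c, hrc, -⟩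
    exacts [hN hrZ, hrc.2.2.1 hrZ]
  have hR : ∀ r ∈ R, ∀ t, MoralAdj adj U Z t r → t ∈ R := fun r hr t htr =>
    mem_filter.2 ⟨htr.1, .head htr (mem_filter.1 hr).2⟩
  have hUR : U \ R ∪ (Z ∪ R) = U := by grind
  refine ci_of_families_subset hp hsum hacyc hPa hfact (by rwa [hUR])
    (fun Y hY => insert_parents_subset_sdiff_or_subset hPa hU hRZ hR (by rwa [hUR] at hY)) ?_ ?_ ?_
  · have hMR : M ∉ R := fun h => hMN (mem_filter.1 h).2
    grind
  · have hNR : N ∈ R := mem_filter.2 ⟨hNU, .refl⟩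
    grind
  · grind

end GlobalMarkov

theorem dsep_soundness_general
    {V : Type*} [Fintype V] [DecidableEq V] {vals : V → Type*} [∀ v, Fintype (vals v)]
    (adj : V → V → Prop) (hacyc : Acyclic adj)
    (p : (∀ v, vals v) → ℝ) (hnn : ∀ u, 0 ≤ p u) (hsum : ∑ u, p u = 1)
    (Pa : V → Finset V) (hPa : ∀ X v, v ∈ Pa X ↔ adj v X)
    (hfact : ∀ u, p u = ∏ X : V, Marg p (insert X (Pa X)) u / Marg p (Pa X) u)
    (M N : V) (Z : Finset V) (hN : N ∉ Z) (hMN : M ≠ N)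
    (hsep : DSep adj (↑Z) M N) :
    CI p {M} {N} Z := by
  set s : Set V := insert M (insert N Z)
  exact ci_of_not_reflTransGen_moralAdj hnn hsum hacyc hPa hfact
    (isAncestral_ancestralClosure hPa s) (mem_ancestralClosure_of_mem (by simp [s]))
    (mem_ancestralClosure_of_mem (by simp [s]))
    (fun z hz => mem_ancestralClosure_of_mem (by simp [s, hz])) hN
    (not_reflTransGen_moralAdj hacyc hMN hsep fun b hb => mem_ancestralClosure.1 hb)

/-- Soundness of d-separation: if the joint distribution `p` over
finitely many finite-valued variables factorizes according to the DAG (Markov condition),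
then `Z` d-separating `M` and `N` implies `M ⊥ N | Z` in `p`. -/
theorem dsep_soundness
    {V : Type*} [Fintype V] [DecidableEq V] {vals : V → Type*} [∀ v, Fintype (vals v)]
    (adj : V → V → Prop) (hacyc : Acyclic adj)
    (p : (∀ v, vals v) → ℝ) (hnn : ∀ u, 0 ≤ p u) (hsum : ∑ u, p u = 1)
    (Pa : V → Finset V) (hPa : ∀ X v, v ∈ Pa X ↔ adj v X)
    (hfact : ∀ u, p u = ∏ X : V, Marg p (insert X (Pa X)) u / Marg p (Pa X) u)
    (M N : V) (Z : Finset V) (hM : M ∉ Z) (hN : N ∉ Z) (hMN : M ≠ N)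
    (hsep : DSep adj (↑Z) M N) :
    CI p {M} {N} Z :=
  dsep_soundness_general adj hacyc p hnn hsum Pa hPa hfact M N Z hN hMN hsep
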